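/- Let n ≥ 1 and suppose char(F) > n. Let S := {(t, t², …, tⁿ) : t ∈ F} ⊆ F^n be the moment curve. Then for every g : S → ℂ one has ‖(g dσ)ˇ‖_{L^{2n}(F^n,dx)} ≤ (n!)^{1/(2n)} ‖g‖_{L^2(S,dσ)}. -/

import Mathlib

open scoped BigOperators

/-- The extension operator `(g dσ)ˇ(x) = |S|⁻¹ ∑_{ξ ∈ S} g ξ ψ(x·ξ)`. -/
noncomputable def extOp {F : Type*} [Field F] [Fintype F] {m : ℕ}
    (ψ : AddChar F ℂ) (S : Finset (Fin m → F)) (g : (Fin m → F) → ℂ) (x : Fin m → F) : ℂ :=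
  (S.card : ℂ)⁻¹ * ∑ ξ ∈ S, g ξ * ψ (∑ i, x i * ξ i)

/-- `‖f‖_{L^q(F^m, dx)}` with counting measure. -/
noncomputable def ambNorm {F : Type*} [Fintype F] {m : ℕ} (q : ℝ) (f : (Fin m → F) → ℂ) : ℝ :=
  (∑ x : Fin m → F, ‖f x‖ ^ q) ^ (1 / q)

/-- `‖g‖_{L^p(S, dσ)}` with normalized counting measure on `S`. -/
noncomputable def surfNorm {F : Type*} {m : ℕ} (p : ℝ) (S : Finset (Fin m → F))
    (g : (Fin m → F) → ℂ) : ℝ :=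
  ((S.card : ℝ)⁻¹ * ∑ ξ ∈ S, ‖g ξ‖ ^ p) ^ (1 / p)

/-- The moment curve `{(t, t², …, tⁿ) : t ∈ F}` in `F^n`. -/
def momentCurve (F : Type*) [Field F] [Fintype F] [DecidableEq F] (n : ℕ) :
    Finset (Fin n → F) :=
  Finset.image (fun t : F => fun i : Fin n => t ^ ((i : ℕ) + 1)) Finset.univ

section AuxiliaryLemmas
open Finset


lemma esymm_eq_of_psum_eq {F : Type*} [Field F] {n : ℕ} (hchar : n < ringChar F)
    (t s : Fin n → F) (hp : ∀ k, 1 ≤ k → k ≤ n → ∑ i, t i ^ k = ∑ i, s i ^ k) :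
    ∀ k, k ≤ n → (Finset.univ.val.map t).esymm k = (Finset.univ.val.map s).esymm k := by
  intro k
  induction k using Nat.strong_induction_on with
  | _ k ih =>
    intro hk
    rcases Nat.eq_zero_or_pos k with rfl | hk1
    · simp [Multiset.esymm]
    have hnewton := congrArg (MvPolynomial.aeval t) (MvPolynomial.mul_esymm_eq_sum (Fin n) F k)
    have hnewton' := congrArg (MvPolynomial.aeval s) (MvPolynomial.mul_esymm_eq_sum (Fin n) F k)
    simp only [map_mul, map_natCast, map_pow, map_neg, map_one, map_sum,
      MvPolynomial.aeval_esymm_eq_multiset_esymm, MvPolynomial.psum, map_sum, map_pow,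
      MvPolynomial.aeval_X] at hnewton hnewton'
    have hkF : (k : F) ≠ 0 := by
      intro h
      rw [CharP.cast_eq_zero_iff F (ringChar F) k] at h
      exact absurd (Nat.le_of_dvd hk1 h) (by omega)
    have key : ∑ a ∈ (antidiagonal k).filter (fun a => a.1 < k),
          (-1 : F) ^ a.1 * (Finset.univ.val.map t).esymm a.1 * (∑ i, t i ^ a.2)
        = ∑ a ∈ (antidiagonal k).filter (fun a => a.1 < k),
          (-1 : F) ^ a.1 * (Finset.univ.val.map s).esymm a.1 * (∑ i, s i ^ a.2) := by
      refine Finset.sum_congr rfl ?_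
      intro a ha
      simp only [Finset.mem_filter, Finset.HasAntidiagonal.mem_antidiagonal] at ha
      rw [ih a.1 ha.2 (by omega), hp a.2 (by omega) (by omega)]
    apply mul_left_cancel₀ hkF
    rw [hnewton, hnewton', key]

lemma multiset_eq_of_esymm_eq {F : Type*} [Field F] {n : ℕ}
    (t s : Fin n → F)
    (he : ∀ k, k ≤ n → (Finset.univ.val.map t).esymm k = (Finset.univ.val.map s).esymm k) :
    (Finset.univ.val.map t) = (Finset.univ.val.map s) := by
  have hct : Multiset.card (Finset.univ.val.map t) = n := by simp
  have hcs : Multiset.card (Finset.univ.val.map s) = n := by simp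
  have hpoly : ((Finset.univ.val.map t).map fun a => Polynomial.X - Polynomial.C a).prod =
      ((Finset.univ.val.map s).map fun a => Polynomial.X - Polynomial.C a).prod := by
    ext k
    by_cases hk : k ≤ n
    · rw [Multiset.prod_X_sub_C_coeff _ (by rw [hct]; exact hk),
        Multiset.prod_X_sub_C_coeff _ (by rw [hcs]; exact hk), hct, hcs,
        he (n - k) (Nat.sub_le _ _)]
    · rw [Polynomial.coeff_eq_zero_of_natDegree_lt, Polynomial.coeff_eq_zero_of_natDegree_lt]
      · rw [Polynomial.natDegree_multiset_prod_X_sub_C_eq_card, hcs]; omega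
      · rw [Polynomial.natDegree_multiset_prod_X_sub_C_eq_card, hct]; omega
  have := congrArg Polynomial.roots hpoly
  rwa [Polynomial.roots_multiset_prod_X_sub_C, Polynomial.roots_multiset_prod_X_sub_C] at this

lemma exists_perm_of_perm_ofFn {α : Type*} [LinearOrder α] {n : ℕ} {f g : Fin n → α}
    (h : List.Perm (List.ofFn f) (List.ofFn g)) : ∃ σ : Equiv.Perm (Fin n), g = f ∘ σ := by
  have hperm : List.Perm (List.ofFn (f ∘ Tuple.sort f)) (List.ofFn (g ∘ Tuple.sort g)) :=
    ((Equiv.Perm.ofFn_comp_perm (Tuple.sort f) f).trans h).trans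
      (Equiv.Perm.ofFn_comp_perm (Tuple.sort g) g).symm
  have h1 : f ∘ Tuple.sort f = g ∘ Tuple.sort g :=
    List.ofFn_injective <| List.Perm.eq_of_sortedLE
      (Tuple.monotone_sort f).sortedLE_ofFn (Tuple.monotone_sort g).sortedLE_ofFn hperm
  refine ⟨(Tuple.sort g).symm.trans (Tuple.sort f), ?_⟩
  funext i
  have := congrFun h1 ((Tuple.sort g).symm i)
  simpa using this.symm

lemma exists_perm_of_multiset_map_eq {F : Type*} [Fintype F] [DecidableEq F] {n : ℕ}
    {t s : Fin n → F} (h : Finset.univ.val.map t = Finset.univ.val.map s) :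
    ∃ σ : Equiv.Perm (Fin n), s = t ∘ σ := by
  set e := Fintype.equivFin F
  have h' : List.Perm (List.ofFn (e ∘ t)) (List.ofFn (e ∘ s)) := by
    rw [← Multiset.coe_eq_coe, List.ofFn_eq_map, List.ofFn_eq_map, ← Multiset.map_coe,
      ← Multiset.map_coe, ← Multiset.map_map, ← Multiset.map_map]
    have huniv : ((List.finRange n : List (Fin n)) : Multiset (Fin n)) = Finset.univ.val := rfl
    rw [huniv, h]
  obtain ⟨σ, hσ⟩ := exists_perm_of_perm_ofFn h'
  refine ⟨σ, funext fun i => e.injective ?_⟩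
  exact congrFun hσ i

lemma exists_perm_of_psum_eq {F : Type*} [Field F] [Fintype F] [DecidableEq F] {n : ℕ}
    (hchar : n < ringChar F) {t s : Fin n → F}
    (h : (fun j : Fin n => ∑ i, t i ^ ((j : ℕ) + 1)) = fun j : Fin n => ∑ i, s i ^ ((j : ℕ) + 1)) :
    ∃ σ : Equiv.Perm (Fin n), s = t ∘ σ := by
  apply exists_perm_of_multiset_map_eq
  apply multiset_eq_of_esymm_eq
  apply esymm_eq_of_psum_eq hchar
  intro k hk1 hkn
  have := congrFun h ⟨k - 1, by omega⟩
  simpa [Nat.sub_add_cancel hk1] using this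

lemma count_bound' {F : Type*} [Field F] [Fintype F] [DecidableEq F] {n : ℕ}
    (hchar : n < ringChar F) (w : F → ℝ) :
    ∑ p ∈ Finset.univ.filter
        (fun p : (Fin n → F) × (Fin n → F) =>
          (fun j : Fin n => ∑ i, p.1 i ^ ((j : ℕ) + 1)) = fun j : Fin n => ∑ i, p.2 i ^ ((j : ℕ) + 1)),
        (∏ i, w (p.1 i)) * ∏ i, w (p.2 i)
      ≤ (n.factorial : ℝ) * (∑ u : F, w u ^ 2) ^ n := by
  classical
  set P : (Fin n → F) → Fin n → F := fun a j => ∑ i, a i ^ ((j : ℕ) + 1) with hP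
  -- each solution term equals ∏ w(a i)^2
  have hterm : ∀ p : (Fin n → F) × (Fin n → F), P p.1 = P p.2 →
      (∏ i, w (p.1 i)) * ∏ i, w (p.2 i) = ∏ i, w (p.1 i) ^ 2 := by
    rintro ⟨a, b⟩ hp
    obtain ⟨σ, hσ⟩ := exists_perm_of_psum_eq hchar hp
    simp only at hσ
    have : ∏ i, w (b i) = ∏ i, w (a i) := by
      rw [hσ]
      exact Equiv.prod_comp σ (fun i => w (a i))
    rw [this, ← Finset.prod_mul_distrib]
    simp [sq]
  calc ∑ p ∈ Finset.univ.filter (fun p : (Fin n → F) × (Fin n → F) => P p.1 = P p.2),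
        (∏ i, w (p.1 i)) * ∏ i, w (p.2 i)
      = ∑ p ∈ Finset.univ.filter (fun p : (Fin n → F) × (Fin n → F) => P p.1 = P p.2),
        ∏ i, w (p.1 i) ^ 2 := by
        refine Finset.sum_congr rfl fun p hp => hterm p ?_
        simpa using (Finset.mem_filter.mp hp).2
    _ = ∑ a : Fin n → F, ∑ b ∈ Finset.univ.filter (fun b => P a = P b), ∏ i, w (a i) ^ 2 := by
        rw [Finset.sum_filter]
        rw [← Finset.univ_product_univ, Finset.sum_product]
        simp_rw [Finset.sum_filter]
    _ = ∑ a : Fin n → F, ((Finset.univ.filter (fun b => P a = P b)).card : ℝ) * ∏ i, w (a i) ^ 2 := by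
        simp [Finset.sum_const, nsmul_eq_mul]
    _ ≤ ∑ a : Fin n → F, (n.factorial : ℝ) * ∏ i, w (a i) ^ 2 := by
        refine Finset.sum_le_sum fun a _ => ?_
        refine mul_le_mul_of_nonneg_right ?_ (Finset.prod_nonneg fun i _ => sq_nonneg _)
        have hsub : Finset.univ.filter (fun b => P a = P b) ⊆
            Finset.image (fun σ : Equiv.Perm (Fin n) => a ∘ σ) Finset.univ := by
          intro b hb
          obtain ⟨σ, hσ⟩ := exists_perm_of_psum_eq hchar (Finset.mem_filter.mp hb).2
          exact Finset.mem_image.mpr ⟨σ, Finset.mem_univ _, hσ.symm⟩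
        have h2 : (Finset.image (fun σ : Equiv.Perm (Fin n) => a ∘ σ) Finset.univ).card ≤ n.factorial := by
          refine Finset.card_image_le.trans ?_
          rw [Finset.card_univ, Fintype.card_perm, Fintype.card_fin]
        exact_mod_cast (Finset.card_le_card hsub).trans h2
    _ = (n.factorial : ℝ) * (∑ u : F, w u ^ 2) ^ n := by
        rw [← Finset.mul_sum]
        congr 1
        rw [Finset.sum_pow', Fintype.piFinset_univ]

lemma addChar_map_sum {F ι : Type*} [AddCommGroup F] (ψ : AddChar F ℂ) (s : Finset ι) (f : ι → F) :
    ψ (∑ i ∈ s, f i) = ∏ i ∈ s, ψ (f i) := by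
  classical
  induction s using Finset.induction with
  | empty => simp
  | insert _ _ h ih => rw [Finset.sum_insert h, Finset.prod_insert h, AddChar.map_add_eq_mul, ih]

lemma orth {F : Type*} [Field F] [Fintype F] [DecidableEq F] {ψ : AddChar F ℂ}
    (hψ : ψ.IsPrimitive) {n : ℕ} (v : Fin n → F) :
    ∑ x : Fin n → F, ψ (∑ i, x i * v i) =
      if v = 0 then ((Fintype.card F : ℂ)) ^ n else 0 := by
  have h1 : ∀ x : Fin n → F, ψ (∑ i, x i * v i) = ∏ i, ψ (x i * v i) := fun x =>
    addChar_map_sum ψ _ _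
  simp_rw [h1]
  have h2 : ∏ i : Fin n, ∑ c : F, ψ (c * v i) =
      ∑ x ∈ Fintype.piFinset (fun _ : Fin n => Finset.univ), ∏ i, ψ (x i * v i) :=
    Finset.prod_univ_sum _ _
  rw [Fintype.piFinset_univ] at h2
  rw [← h2]
  have h3 : ∀ i : Fin n, ∑ c : F, ψ (c * v i) =
      if v i = 0 then (Fintype.card F : ℂ) else 0 := by
    intro i
    rw [AddChar.sum_mulShift (v i) hψ]
    split_ifs <;> simp
  simp_rw [h3]
  by_cases hv : v = 0
  · simp [hv]
  · rw [if_neg hv]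
    obtain ⟨i, hi⟩ : ∃ i, v i ≠ 0 := by
      by_contra h
      push_neg at h
      exact hv (funext h)
    exact Finset.prod_eq_zero (Finset.mem_univ i) (by rw [if_neg hi])


lemma key_bound {F : Type*} [Field F] [Fintype F] [DecidableEq F] {ψ : AddChar F ℂ}
    (hψ : ψ.IsPrimitive) {n : ℕ} (hchar : n < ringChar F) (G : F → ℂ) :
    ∑ x : Fin n → F, ‖∑ u : F, G u * ψ (∑ j, x j * u ^ ((j : ℕ) + 1))‖ ^ (2 * n)
      ≤ (Fintype.card F : ℝ) ^ n * ((n.factorial : ℝ) * (∑ u : F, ‖G u‖ ^ 2) ^ n) := by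
  classical
  set q : ℕ := Fintype.card F with hq
  set T : (Fin n → F) → ℂ := fun x => ∑ u : F, G u * ψ (∑ j, x j * u ^ ((j : ℕ) + 1)) with hT
  set P : (Fin n → F) → Fin n → F := fun a j => ∑ i, a i ^ ((j : ℕ) + 1) with hPdef
  set W : ((Fin n → F) × (Fin n → F)) → ℂ :=
    fun p => (∏ i, G (p.1 i)) * ∏ i, (starRingEnd ℂ) (G (p.2 i)) with hW
  set D : Finset ((Fin n → F) × (Fin n → F)) :=
    Finset.univ.filter (fun p => P p.1 = P p.2) with hD
  -- expansion of T^n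
  have hTpow : ∀ x, (T x) ^ n = ∑ a : Fin n → F, (∏ i, G (a i)) * ψ (∑ j, x j * P a j) := by
    intro x
    rw [hT]
    rw [Finset.sum_pow', Fintype.piFinset_univ]
    refine Finset.sum_congr rfl fun a _ => ?_
    rw [Finset.prod_mul_distrib, ← addChar_map_sum]
    have harg : ∑ i : Fin n, ∑ j : Fin n, x j * a i ^ ((j : ℕ) + 1)
        = ∑ j : Fin n, x j * P a j := by
      rw [Finset.sum_comm]
      exact Finset.sum_congr rfl fun j _ => (Finset.mul_sum _ _ _).symm
    rw [harg]
  have hTconj : ∀ x, (starRingEnd ℂ) ((T x) ^ n) =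
      ∑ b : Fin n → F, (∏ i, (starRingEnd ℂ) (G (b i))) * ψ (-∑ j, x j * P b j) := by
    intro x
    rw [map_pow, hT, map_sum]
    simp_rw [map_mul, ← AddChar.map_neg_eq_conj]
    rw [Finset.sum_pow', Fintype.piFinset_univ]
    refine Finset.sum_congr rfl fun b _ => ?_
    rw [Finset.prod_mul_distrib, ← addChar_map_sum]
    have harg : ∑ i : Fin n, -∑ j : Fin n, x j * b i ^ ((j : ℕ) + 1)
        = -∑ j : Fin n, x j * P b j := by
      rw [Finset.sum_neg_distrib, neg_inj, Finset.sum_comm]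
      exact Finset.sum_congr rfl fun j _ => (Finset.mul_sum _ _ _).symm
    rw [harg]
  -- per-x product expansion
  have hx : ∀ x : Fin n → F, (T x) ^ n * (starRingEnd ℂ) ((T x) ^ n) =
      ∑ p : (Fin n → F) × (Fin n → F), W p * ψ (∑ j, x j * (P p.1 j - P p.2 j)) := by
    intro x
    rw [hTconj x, hTpow x, Finset.sum_mul_sum, ← Finset.sum_product', Finset.univ_product_univ]
    refine Finset.sum_congr rfl fun p _ => ?_
    rw [mul_mul_mul_comm, ← AddChar.map_add_eq_mul]
    show _ = W p * _
    have harg : (∑ j, x j * P p.1 j) + -(∑ j, x j * P p.2 j)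
        = ∑ j, x j * (P p.1 j - P p.2 j) := by
      rw [← sub_eq_add_neg, ← Finset.sum_sub_distrib]
      exact Finset.sum_congr rfl fun j _ => (mul_sub _ _ _).symm
    rw [harg]
  -- total sum identity
  have hC : ∑ x : Fin n → F, (T x) ^ n * (starRingEnd ℂ) ((T x) ^ n) =
      (q : ℂ) ^ n * ∑ p ∈ D, W p := by
    calc ∑ x : Fin n → F, (T x) ^ n * (starRingEnd ℂ) ((T x) ^ n)
        = ∑ x : Fin n → F, ∑ p : (Fin n → F) × (Fin n → F),
            W p * ψ (∑ j, x j * (P p.1 j - P p.2 j)) := Finset.sum_congr rfl fun x _ => hx x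
      _ = ∑ p : (Fin n → F) × (Fin n → F), ∑ x : Fin n → F,
            W p * ψ (∑ j, x j * (P p.1 j - P p.2 j)) := Finset.sum_comm
      _ = ∑ p : (Fin n → F) × (Fin n → F),
            W p * (if (fun j => P p.1 j - P p.2 j) = 0 then (q : ℂ) ^ n else 0) := by
          refine Finset.sum_congr rfl fun p _ => ?_
          rw [← Finset.mul_sum, orth hψ]
      _ = ∑ p ∈ D, W p * (q : ℂ) ^ n := by
          rw [hD, Finset.sum_filter]
          refine Finset.sum_congr rfl fun p _ => ?_
          have hcond : ((fun j => P p.1 j - P p.2 j) = 0) ↔ P p.1 = P p.2 := by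
            constructor
            · intro h
              funext j
              exact sub_eq_zero.mp (congrFun h j)
            · intro h
              funext j
              rw [h]
              simp
          rw [mul_ite, mul_zero, if_congr hcond rfl rfl]
      _ = (q : ℂ) ^ n * ∑ p ∈ D, W p := by rw [← Finset.sum_mul, mul_comm]
  -- passing to absolute values
  have habs : ∀ x : Fin n → F, (‖T x‖) ^ (2 * n) =
      ((T x) ^ n * (starRingEnd ℂ) ((T x) ^ n)).re := by
    intro x
    rw [Complex.mul_conj]
    rw [Complex.ofReal_re]
    rw [Complex.normSq_eq_norm_sq, norm_pow, ← pow_mul, mul_comm n 2]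
  calc ∑ x : Fin n → F, ‖T x‖ ^ (2 * n)
      = (∑ x : Fin n → F, (T x) ^ n * (starRingEnd ℂ) ((T x) ^ n)).re := by
        rw [Complex.re_sum]
        exact Finset.sum_congr rfl fun x _ => habs x
    _ = ((q : ℂ) ^ n * ∑ p ∈ D, W p).re := by rw [hC]
    _ ≤ ‖(q : ℂ) ^ n * ∑ p ∈ D, W p‖ := Complex.re_le_norm _
    _ = (q : ℝ) ^ n * ‖∑ p ∈ D, W p‖ := by
        rw [norm_mul, norm_pow, Complex.norm_natCast]
    _ ≤ (q : ℝ) ^ n * ∑ p ∈ D, ‖W p‖ := by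
        refine mul_le_mul_of_nonneg_left ?_ (by positivity)
        exact norm_sum_le _ _
    _ ≤ (q : ℝ) ^ n * ((n.factorial : ℝ) * (∑ u : F, ‖G u‖ ^ 2) ^ n) := by
        refine mul_le_mul_of_nonneg_left ?_ (by positivity)
        have : ∀ p ∈ D, ‖W p‖ =
            (∏ i, ‖G (p.1 i)‖) * ∏ i, ‖G (p.2 i)‖ := by
          intro p _
          rw [hW, norm_mul]
          congr 1
          · exact norm_prod _ _
          · rw [norm_prod]
            exact Finset.prod_congr rfl fun i _ => Complex.norm_conj _
        rw [Finset.sum_congr rfl this]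
        exact count_bound' hchar (fun u => ‖G u‖)

end AuxiliaryLemmas

theorem statement1
    {F : Type*} [Field F] [Fintype F] [DecidableEq F]
    (hchar2 : ringChar F ≠ 2)
    (ψ : AddChar F ℂ) (hψ : ∃ a, ψ a ≠ 1)
    (n : ℕ) (hn : 1 ≤ n) (hchar : (n : ℕ) < ringChar F)
    (g : (Fin n → F) → ℂ) :
    ambNorm (2 * (n : ℝ)) (extOp ψ (momentCurve F n) g) ≤
      (Nat.factorial n : ℝ) ^ (1 / (2 * (n : ℝ))) * surfNorm 2 (momentCurve F n) g := by
  classical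
  have hψ' : ψ.IsPrimitive := by
    apply AddChar.IsPrimitive.of_ne_one
    intro h
    obtain ⟨a, ha⟩ := hψ
    exact ha (by rw [h]; rfl)
  set γ : F → (Fin n → F) := fun t => fun i : Fin n => t ^ ((i : ℕ) + 1) with hγ
  have hγinj : Function.Injective γ := by
    intro a b h
    have := congrFun h ⟨0, hn⟩
    simpa [hγ] using this
  set q : ℕ := Fintype.card F with hq
  have hq1 : 0 < q := Fintype.card_pos
  have hqR : (q : ℝ) ≠ 0 := by positivity
  have hcard : (momentCurve F n).card = q := by
    rw [momentCurve, Finset.card_image_of_injective _ hγinj, Finset.card_univ]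
  set G : F → ℂ := fun u => g (γ u) with hG
  set A : ℝ := ∑ u : F, ‖G u‖ ^ 2 with hA
  have hA0 : 0 ≤ A := Finset.sum_nonneg fun u _ => by positivity
  have hqA0 : 0 ≤ (q : ℝ)⁻¹ * A := by positivity
  -- extension operator rewritten
  have hext : ∀ x, extOp ψ (momentCurve F n) g x =
      (q : ℂ)⁻¹ * ∑ u : F, G u * ψ (∑ j, x j * u ^ ((j : ℕ) + 1)) := by
    intro x
    rw [extOp, hcard, momentCurve,
      Finset.sum_image (fun a _ b _ h => hγinj h)]
  -- the L² norm on the curve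
  have hsurf : surfNorm 2 (momentCurve F n) g = ((q : ℝ)⁻¹ * A) ^ (1/2 : ℝ) := by
    rw [surfNorm, hcard]
    congr 2
    rw [momentCurve, Finset.sum_image (fun a _ b _ h => hγinj h)]
    refine Finset.sum_congr rfl fun u _ => ?_
    rw [show (2:ℝ) = ((2:ℕ):ℝ) by norm_num, Real.rpow_natCast]
  -- bound the 2n-th power sum
  have hmain : ∑ x : Fin n → F, ‖extOp ψ (momentCurve F n) g x‖ ^ (2 * n)
      ≤ (n.factorial : ℝ) * ((q : ℝ)⁻¹ * A) ^ n := by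
    have h1 : ∀ x, ‖extOp ψ (momentCurve F n) g x‖ ^ (2 * n) =
        ((q : ℝ)⁻¹) ^ (2 * n) *
          ‖∑ u : F, G u * ψ (∑ j, x j * u ^ ((j : ℕ) + 1))‖ ^ (2 * n) := by
      intro x
      rw [hext x, norm_mul, mul_pow]
      congr 2
      rw [norm_inv]
      norm_num
    simp_rw [h1]
    rw [← Finset.mul_sum]
    calc ((q : ℝ)⁻¹) ^ (2 * n) *
          ∑ x : Fin n → F, ‖∑ u : F, G u * ψ (∑ j, x j * u ^ ((j : ℕ) + 1))‖ ^ (2 * n)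
        ≤ ((q : ℝ)⁻¹) ^ (2 * n) *
          ((q : ℝ) ^ n * ((n.factorial : ℝ) * A ^ n)) := by
          refine mul_le_mul_of_nonneg_left ?_ (by positivity)
          exact key_bound hψ' hchar G
      _ = (n.factorial : ℝ) * ((q : ℝ)⁻¹ * A) ^ n := by
          rw [mul_pow]
          field_simp
          rw [two_mul, pow_add, mul_assoc ((1 / (q:ℝ))^n), ← mul_pow (1 / (q:ℝ)) (q:ℝ) n, one_div_mul_cancel hqR, one_pow, mul_one, mul_comm]
  -- now the rpow manipulations
  have hcast : (2 * (n : ℝ)) = ((2 * n : ℕ) : ℝ) := by push_cast; ring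
  have hinner : ∀ x, ‖extOp ψ (momentCurve F n) g x‖ ^ (2 * (n : ℝ)) =
      ‖extOp ψ (momentCurve F n) g x‖ ^ (2 * n : ℕ) := by
    intro x
    rw [hcast, Real.rpow_natCast]
  rw [ambNorm]
  simp_rw [hinner]
  have hsum0 : 0 ≤ ∑ x : Fin n → F, ‖extOp ψ (momentCurve F n) g x‖ ^ (2 * n) :=
    Finset.sum_nonneg fun x _ => by positivity
  have hexp0 : (0:ℝ) ≤ 1 / (2 * (n : ℝ)) := by positivity
  calc (∑ x : Fin n → F, ‖extOp ψ (momentCurve F n) g x‖ ^ (2 * n : ℕ)) ^ (1 / (2 * (n:ℝ)))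
      ≤ ((n.factorial : ℝ) * ((q : ℝ)⁻¹ * A) ^ n) ^ (1 / (2 * (n:ℝ))) :=
        Real.rpow_le_rpow hsum0 hmain hexp0
    _ = (Nat.factorial n : ℝ) ^ (1 / (2 * (n : ℝ))) * surfNorm 2 (momentCurve F n) g := by
        rw [hsurf, Real.mul_rpow (by positivity) (by positivity)]
        congr 1
        rw [← Real.rpow_natCast ((q : ℝ)⁻¹ * A) n, ← Real.rpow_mul hqA0]
        congr 1
        have hn0 : (n : ℝ) ≠ 0 := by positivity
        field_simp
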